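/- (Affine distance is a metric on the past light cone.) Let u be an observer in Minkowski space and let C⁻ = {x ∈ ℝ⁴ : x ≠ 0, g(x,x) = 0, x⁰ < 0} be the past light cone of the origin minus its vertex. Define d_u(x,x′) = √(g(π_{u^⊥}(x − x′), π_{u^⊥}(x − x′))) for x, x′ ∈ C⁻. Then d_u is a metric on C⁻: it is symmetric, satisfies the triangle inequality d_u(x,x″) ≤ d_u(x,x′) + d_u(x′,x″), and is positive-definite, i.e., d_u(x,x′) = 0 if and only if x = x′. -/

import Mathlib

noncomputable section

/-- The Minkowski bilinear form on ℝ⁴ (signature (−,+,+,+)). -/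
def g (x y : Fin 4 → ℝ) : ℝ :=
  -(x 0 * y 0) + x 1 * y 1 + x 2 * y 2 + x 3 * y 3

/-- An observer: a future-pointing timelike unit vector. -/
def IsObserver (u : Fin 4 → ℝ) : Prop := g u u = -1 ∧ 0 < u 0

/-- The g-orthogonal projection of `x` onto `u^⊥`. -/
def proj (u x : Fin 4 → ℝ) : Fin 4 → ℝ := x + g x u • u

/-- The past light cone of the origin, minus its vertex. -/
def pastCone : Set (Fin 4 → ℝ) := {x | x ≠ 0 ∧ g x x = 0 ∧ x 0 < 0}

/-- The affine distance between two observed events, as seen by `u`. -/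
def affDist (u x x' : Fin 4 → ℝ) : ℝ :=
  Real.sqrt (g (proj u (x - x')) (proj u (x - x')))

/-!
`proj u` is linear with image in `u^⊥`, where `g` is positive definite, so `affDist u` is the
seminorm of a positive semidefinite form applied to differences; the triangle inequality is
Cauchy–Schwarz on `u^⊥`. The form vanishes exactly on `ℝ u`, so `affDist u x x' = 0` means
`x = x' + t • u`; for null `x, x'` this forces `t (g x u + g x' u) = 0`, and `g x u > 0` on the
past cone, so `t = 0`.
-/

namespace Minkowski

lemma g_add_smul_left (p q r : Fin 4 → ℝ) (t : ℝ) :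
    g (p + t • q) r = g p r + t * g q r := by
  simp only [g, Pi.add_apply, Pi.smul_apply, smul_eq_mul]; ring

lemma g_add_smul_self (p q : Fin 4 → ℝ) (t : ℝ) :
    g (p + t • q) (p + t • q) = g p p + 2 * t * g p q + t ^ 2 * g q q := by
  simp only [g, Pi.add_apply, Pi.smul_apply, smul_eq_mul]; ring

lemma proj_neg (u v : Fin 4 → ℝ) : proj u (-v) = -proj u v := by
  ext i; simp only [proj, g, Pi.add_apply, Pi.neg_apply, Pi.smul_apply, smul_eq_mul]; ring

lemma proj_add (u v w : Fin 4 → ℝ) : proj u (v + w) = proj u v + proj u w := by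
  ext i; simp only [proj, g, Pi.add_apply, Pi.smul_apply, smul_eq_mul]; ring

lemma g_proj_left {u : Fin 4 → ℝ} (hu : g u u = -1) (v : Fin 4 → ℝ) : g (proj u v) u = 0 := by
  rw [proj, g_add_smul_left, hu]; ring

lemma eq_smul_of_proj_eq_zero {u v : Fin 4 → ℝ} (h : proj u v = 0) : v = (-g v u) • u := by
  rw [proj, add_eq_zero_iff_eq_neg] at h
  rw [neg_smul]
  exact h

/-- From `w₀ u₀ = w⃗ · u⃗`, Cauchy–Schwarz in ℝ³ and `|u⃗|² = u₀² - 1`. -/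
lemma spatial_sq_le_of_orthogonal {u w : Fin 4 → ℝ} (hu : g u u = -1) (hw : g w u = 0) :
    w 1 ^ 2 + w 2 ^ 2 + w 3 ^ 2 ≤ u 0 ^ 2 * g w w := by
  simp only [g] at *
  have hw0 : w 0 * u 0 = w 1 * u 1 + w 2 * u 2 + w 3 * u 3 := by linarith
  nlinarith [sq_nonneg (w 1 * u 2 - w 2 * u 1), sq_nonneg (w 1 * u 3 - w 3 * u 1),
    sq_nonneg (w 2 * u 3 - w 3 * u 2), congrArg (· ^ 2) hw0]

section Observer

variable {u : Fin 4 → ℝ} (hu : IsObserver u)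
include hu

lemma g_self_nonneg_of_orthogonal {w : Fin 4 → ℝ} (hw : g w u = 0) : 0 ≤ g w w := by
  have := spatial_sq_le_of_orthogonal hu.1 hw
  exact nonneg_of_mul_nonneg_right (le_trans (by positivity) this) (pow_pos hu.2 2)

lemma eq_zero_of_orthogonal_of_g_self_eq_zero {w : Fin 4 → ℝ} (hw : g w u = 0)
    (hww : g w w = 0) : w = 0 := by
  have hspatial := spatial_sq_le_of_orthogonal hu.1 hw
  rw [hww, mul_zero] at hspatial
  have h1 : w 1 = 0 := by nlinarith [sq_nonneg (w 1), sq_nonneg (w 2), sq_nonneg (w 3)]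
  have h2 : w 2 = 0 := by nlinarith [sq_nonneg (w 1), sq_nonneg (w 2), sq_nonneg (w 3)]
  have h3 : w 3 = 0 := by nlinarith [sq_nonneg (w 1), sq_nonneg (w 2), sq_nonneg (w 3)]
  have h0 : w 0 = 0 := by
    simp only [g, h1, h2, h3] at hw
    exact (mul_eq_zero.mp (by linarith : w 0 * u 0 = 0)).resolve_right hu.2.ne'
  ext i; fin_cases i <;> assumption

lemma g_sq_le_of_orthogonal {p q : Fin 4 → ℝ} (hp : g p u = 0) (hq : g q u = 0) :
    g p q ^ 2 ≤ g p p * g q q := by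
  have hquad : ∀ t : ℝ, 0 ≤ g q q * (t * t) + 2 * g p q * t + g p p := fun t => by
    have horth : g (p + t • q) u = 0 := by rw [g_add_smul_left, hp, hq]; ring
    have := g_self_nonneg_of_orthogonal hu horth
    rw [g_add_smul_self] at this
    linarith
  have := discrim_le_zero hquad
  rw [discrim] at this
  linarith

lemma sqrt_g_add_le_of_orthogonal {p q : Fin 4 → ℝ} (hp : g p u = 0) (hq : g q u = 0) :
    √(g (p + q) (p + q)) ≤ √(g p p) + √(g q q) := by
  have hpp := g_self_nonneg_of_orthogonal hu hp
  have hqq := g_self_nonneg_of_orthogonal hu hq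
  have hpq : g p q ≤ √(g p p) * √(g q q) := by
    rw [← Real.sqrt_mul hpp]
    exact Real.le_sqrt_of_sq_le (g_sq_le_of_orthogonal hu hp hq)
  have hsum : g (p + q) (p + q) = g p p + 2 * g p q + g q q := by
    simpa using g_add_smul_self p q 1
  rw [Real.sqrt_le_left (by positivity), hsum, add_sq, Real.sq_sqrt hpp, Real.sq_sqrt hqq]
  linarith

/-- Reverse Cauchy–Schwarz: a past-pointing null vector and a future-pointing timelike one
have positive `g`. -/
lemma g_pos_of_mem_pastCone {x : Fin 4 → ℝ} (hx : x ∈ pastCone) : 0 < g x u := by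
  obtain ⟨-, hxx, hx0⟩ := hx
  obtain ⟨huu, hu0⟩ := hu
  simp only [g] at *
  nlinarith [sq_nonneg (x 1 * u 2 - x 2 * u 1), sq_nonneg (x 1 * u 3 - x 3 * u 1),
    sq_nonneg (x 2 * u 3 - x 3 * u 2), mul_pos (neg_pos.mpr hx0) hu0,
    sq_nonneg (-(x 0 * u 0) + x 1 * u 1 + x 2 * u 2 + x 3 * u 3),
    sq_nonneg (x 0 * u 0 + x 1 * u 1 + x 2 * u 2 + x 3 * u 3)]

lemma eq_of_mem_pastCone_of_eq_add_smul {x x' : Fin 4 → ℝ} (hx : x ∈ pastCone)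
    (hx' : x' ∈ pastCone) {t : ℝ} (hxt : x = x' + t • u) : x = x' := by
  have hnull := hx.2.1
  rw [hxt, g_add_smul_self, hx'.2.1, hu.1] at hnull
  have hgx : g x u = g x' u - t := by rw [hxt, g_add_smul_left, hu.1]; ring
  have hsum_pos : 0 < g x u + g x' u :=
    add_pos (g_pos_of_mem_pastCone hu hx) (g_pos_of_mem_pastCone hu hx')
  have ht : t = 0 := by
    have : t * (g x u + g x' u) = 0 := by rw [hgx]; linarith
    exact (mul_eq_zero.mp this).resolve_right hsum_pos.ne'
  rw [hxt, ht, zero_smul, add_zero]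

lemma affDist_triangle (x x' x'' : Fin 4 → ℝ) :
    affDist u x x'' ≤ affDist u x x' + affDist u x' x'' := by
  have hsplit : x - x'' = (x - x') + (x' - x'') := by abel
  rw [affDist, affDist, affDist, hsplit, proj_add]
  exact sqrt_g_add_le_of_orthogonal hu (g_proj_left hu.1 _) (g_proj_left hu.1 _)

lemma affDist_eq_zero_iff {x x' : Fin 4 → ℝ} (hx : x ∈ pastCone) (hx' : x' ∈ pastCone) :
    affDist u x x' = 0 ↔ x = x' := by
  refine ⟨fun h => ?_, fun h => by simp [h, affDist, proj, g]⟩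
  have hp := g_proj_left hu.1 (x - x')
  have hpp : g (proj u (x - x')) (proj u (x - x')) = 0 :=
    le_antisymm (Real.sqrt_eq_zero'.mp h) (g_self_nonneg_of_orthogonal hu hp)
  have hdiff := eq_smul_of_proj_eq_zero (eq_zero_of_orthogonal_of_g_self_eq_zero hu hp hpp)
  exact eq_of_mem_pastCone_of_eq_add_smul hu hx hx' (by rw [← hdiff]; abel)

end Observer

lemma affDist_comm (u x x' : Fin 4 → ℝ) : affDist u x x' = affDist u x' x := by
  rw [affDist, affDist, ← neg_sub, proj_neg]
  simp only [g, Pi.neg_apply, neg_mul_neg]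

end Minkowski

open Minkowski in
/-- Affine distance is a metric on the past light cone: symmetric, triangle
inequality, and positive-definite. -/
theorem affine_distance_is_metric (u : Fin 4 → ℝ) (hu : IsObserver u) :
    (∀ x ∈ pastCone, ∀ x' ∈ pastCone, affDist u x x' = affDist u x' x) ∧
    (∀ x ∈ pastCone, ∀ x' ∈ pastCone, ∀ x'' ∈ pastCone,
      affDist u x x'' ≤ affDist u x x' + affDist u x' x'') ∧
    (∀ x ∈ pastCone, ∀ x' ∈ pastCone, (affDist u x x' = 0 ↔ x = x')) :=
  ⟨fun x _ x' _ => affDist_comm u x x',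
    fun x _ x' _ x'' _ => affDist_triangle hu x x' x'',
    fun _ hx _ hx' => affDist_eq_zero_iff hu hx hx'⟩
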